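/- arXiv:2004.06285 — 2 statements merged into one kernel-verified Lean document; each statement's English description precedes it below -/
import Mathlib

section
/- Let G be a connected simple graph of order n with minimum degree δ(G). If δ(G) ≥ (n+2)/2, then rvd(G) = n. -/
open SimpleGraph

/-- The graph obtained from `G` by removing (isolating) the vertices of `S`.
Since in our uses the endpoints of interest never lie in `S`, reachability
between them in this graph agrees with reachability in `G - S`. -/
def SimpleGraph.delVerts {V : Type*} (G : SimpleGraph V) (S : Set V) : SimpleGraph V where
  Adj u v := G.Adj u v ∧ u ∉ S ∧ v ∉ S
  symm := ⟨fun u v h => ⟨h.1.symm, h.2.2, h.2.1⟩⟩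
  loopless := ⟨fun v h => G.irrefl h.1⟩

/-- `c` is a rainbow vertex-disconnection coloring of `G`: every two distinct
vertices `x, y` admit an `x`-`y` rainbow vertex-cut. -/
def SimpleGraph.IsRVDColoring {V α : Type*} (G : SimpleGraph V) (c : V → α) : Prop :=
  ∀ x y : V, x ≠ y → ∃ S : Set V, x ∉ S ∧ y ∉ S ∧
    (¬ G.Adj x y → ¬ (G.delVerts S).Reachable x y ∧ Set.InjOn c S) ∧
    (G.Adj x y → ¬ ((G.deleteEdges {s(x, y)}).delVerts S).Reachable x y ∧
      (Set.InjOn c (S ∪ {x}) ∨ Set.InjOn c (S ∪ {y})))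

/-- The rainbow vertex-disconnection number of `G`: the minimum number of colors
in a rainbow vertex-disconnection coloring of `G`. -/
noncomputable def SimpleGraph.rvd {V : Type*} (G : SimpleGraph V) : ℕ :=
  sInf {k | ∃ c : V → Fin k, G.IsRVDColoring c}

/-!
Every coloring with pairwise distinct colors is a rainbow vertex-disconnection coloring, since
all vertices other than `x, y` form an `x`-`y` cut. Conversely, if `δ(G) ≥ (n+2)/2` then any
two vertices `u ≠ v` have two distinct common neighbours `x, y`; both `u` and `v` lie in every
`x`-`y` vertex-cut, so a rainbow one forces `u` and `v` to get different colors.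
-/

namespace SimpleGraph

variable {V α : Type*} {G H : SimpleGraph V} {S : Set V} {x y w : V}

lemma adj_of_reachable_delVerts_compl_pair (hxy : x ≠ y)
    (h : (H.delVerts ({x, y} : Set V)ᶜ).Reachable x y) : H.Adj x y := by
  obtain ⟨p⟩ := h
  cases p with
  | nil => exact absurd rfl hxy
  | @cons _ z _ hz _ =>
    obtain ⟨hxz, -, hzS⟩ := hz
    obtain rfl | rfl : z = x ∨ z = y := by simpa [or_iff_not_imp_left] using hzS
    exacts [absurd hxz (H.irrefl), hxz]

lemma reachable_delVerts_of_adj_of_adj (hxw : H.Adj x w) (hwy : H.Adj w y)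
    (hx : x ∉ S) (hw : w ∉ S) (hy : y ∉ S) : (H.delVerts S).Reachable x y :=
  (show (H.delVerts S).Adj x w from ⟨hxw, hx, hw⟩).reachable.trans
    (show (H.delVerts S).Adj w y from ⟨hwy, hw, hy⟩).reachable

lemma isRVDColoring_of_injective {c : V → α} (hc : c.Injective) : G.IsRVDColoring c := by
  intro x y hxy
  refine ⟨({x, y} : Set V)ᶜ, by simp, by simp, fun hadj => ⟨?_, hc.injOn⟩,
    fun _ => ⟨?_, Or.inl hc.injOn⟩⟩
  · exact fun hr => hadj (adj_of_reachable_delVerts_compl_pair hxy hr)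
  · intro hr
    simpa using adj_of_reachable_delVerts_compl_pair hxy hr

/-- The path `x w y` through a common neighbour `w` avoids the edge `xy`, so `w` lies in every
`x`-`y` vertex-cut. -/
lemma IsRVDColoring.exists_injOn_commonNeighbors_subset {c : V → α} (hc : G.IsRVDColoring c)
    (hxy : x ≠ y) : ∃ S : Set V, G.commonNeighbors x y ⊆ S ∧ Set.InjOn c S := by
  obtain ⟨S, hx, hy, hnonadj, hadj⟩ := hc x y hxy
  by_cases hxy' : G.Adj x y
  · obtain ⟨hcut, hinj | hinj⟩ := hadj hxy'
    all_goals
      refine ⟨S ∪ _, fun w hw => Or.inl ?_, hinj⟩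
      rw [mem_commonNeighbors] at hw
      by_contra hwS
      refine hcut (reachable_delVerts_of_adj_of_adj ?_ ?_ hx hwS hy)
      · simp [hw.1, hw.2.ne', hxy]
      · simp [hw.2.symm, hw.1.ne', hxy.symm]
  · obtain ⟨hcut, hinj⟩ := hnonadj hxy'
    refine ⟨S, fun w hw => ?_, hinj⟩
    rw [mem_commonNeighbors] at hw
    by_contra hwS
    exact hcut (reachable_delVerts_of_adj_of_adj hw.1 hw.2.symm hx hwS hy)

lemma IsRVDColoring.injective {c : V → α} (hc : G.IsRVDColoring c)
    (hG : ∀ u v, u ≠ v → (G.commonNeighbors u v).Nontrivial) : c.Injective := by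
  intro u v huv
  by_contra hne
  obtain ⟨x, hx, y, hy, hxy⟩ := hG u v hne
  obtain ⟨S, hS, hinj⟩ := hc.exists_injOn_commonNeighbors_subset hxy
  exact hne (hinj (hS ⟨hx.1.symm, hy.1.symm⟩) (hS ⟨hx.2.symm, hy.2.symm⟩) huv)

lemma rvd_eq_card_of_forall_commonNeighbors_nontrivial [Fintype V]
    (hG : ∀ u v, u ≠ v → (G.commonNeighbors u v).Nontrivial) : G.rvd = Fintype.card V := by
  have hmem : Fintype.card V ∈ {k | ∃ c : V → Fin k, G.IsRVDColoring c} :=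
    ⟨Fintype.equivFin V, isRVDColoring_of_injective (Fintype.equivFin V).injective⟩
  refine le_antisymm (Nat.sInf_le hmem) (le_csInf ⟨_, hmem⟩ ?_)
  rintro k ⟨c, hc⟩
  simpa using Fintype.card_le_of_injective c (hc.injective hG)

lemma commonNeighbors_nontrivial_of_card_add_two_le [Fintype V] [DecidableRel G.Adj] {u v : V}
    (h : Fintype.card V + 2 ≤ G.degree u + G.degree v) : (G.commonNeighbors u v).Nontrivial := by
  classical
  have hcard : 1 < (G.neighborFinset u ∩ G.neighborFinset v).card := by
    have := Finset.card_union_add_card_inter (G.neighborFinset u) (G.neighborFinset v)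
    have := (G.neighborFinset u ∪ G.neighborFinset v).card_le_univ
    simp only [card_neighborFinset_eq_degree] at *
    omega
  obtain ⟨x, hx, y, hy, hxy⟩ := Finset.one_lt_card.mp hcard
  simp only [Finset.mem_inter, mem_neighborFinset] at hx hy
  exact ⟨x, G.mem_commonNeighbors.2 hx, y, G.mem_commonNeighbors.2 hy, hxy⟩

end SimpleGraph

theorem rvd_eq_card_of_minDegree_general {V : Type*} [Fintype V] (G : SimpleGraph V)
    [DecidableRel G.Adj]
    (hδ : ((Fintype.card V : ℝ) + 2) / 2 ≤ (G.minDegree : ℝ)) :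
    G.rvd = Fintype.card V := by
  have hδ' : Fintype.card V + 2 ≤ 2 * G.minDegree := by
    have : (Fintype.card V : ℝ) + 2 ≤ 2 * G.minDegree := by linarith
    exact_mod_cast this
  refine rvd_eq_card_of_forall_commonNeighbors_nontrivial fun u v _ =>
    commonNeighbors_nontrivial_of_card_add_two_le ?_
  linarith [G.minDegree_le_degree u, G.minDegree_le_degree v]

/-- If `G` is a connected graph of order `n` with minimum degree
`δ(G) ≥ (n+2)/2`, then `rvd(G) = n`. -/
theorem rvd_eq_card_of_minDegree {V : Type*} [Fintype V] (G : SimpleGraph V)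
    [DecidableRel G.Adj] (hG : G.Connected)
    (hδ : ((Fintype.card V : ℝ) + 2) / 2 ≤ (G.minDegree : ℝ)) :
    G.rvd = Fintype.card V :=
  rvd_eq_card_of_minDegree_general G hδ
end

section
/- Every injective coloring of a nontrivial connected simple graph G is a rainbow vertex-disconnection coloring of G; in particular rvd(G) ≤ χ_i(G). -/
open SimpleGraph

/-- An injective coloring of `G`: any two distinct vertices having a common
neighbor receive different colors. -/
def SimpleGraph.IsInjectiveColoring {V α : Type*} (G : SimpleGraph V) (c : V → α) : Prop :=
  ∀ u v : V, u ≠ v → (∃ w : V, G.Adj u w ∧ G.Adj v w) → c u ≠ c v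

/-- The injective chromatic number `χ_i(G)`. -/
noncomputable def SimpleGraph.injChromNum {V : Type*} (G : SimpleGraph V) : ℕ :=
  sInf {k | ∃ c : V → Fin k, G.IsInjectiveColoring c}

namespace SimpleGraph

variable {V α : Type*} (G : SimpleGraph V)

theorem not_reachable_delVerts_of_neighborSet_subset {S : Set V} {x y : V} (hxy : x ≠ y)
    (hS : G.neighborSet x ⊆ S) : ¬ (G.delVerts S).Reachable x y := by
  rintro ⟨_ | ⟨⟨hxw, -, hw⟩, -⟩⟩
  · exact hxy rfl
  · exact hw (hS hxw)

theorem neighborSet_deleteEdges_subset (x y : V) :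
    (G.deleteEdges {s(x, y)}).neighborSet x ⊆ G.neighborSet x \ {y} := by
  rintro w ⟨hxw, hne⟩
  refine ⟨hxw, ?_⟩
  rintro rfl
  exact hne ⟨rfl, hxw.ne⟩

variable {G}

theorem IsInjectiveColoring.injOn_neighborSet {c : V → α} (hc : G.IsInjectiveColoring c)
    (x : V) : Set.InjOn c (G.neighborSet x) := fun u hu v hv huv =>
  by_contra fun hne => hc u v hne ⟨x, hu.symm, hv.symm⟩ huv

/-- The cut separating `x` from `y` is the neighbourhood of `x` with `y` removed: it has the
common neighbour `x`, so an injective coloring makes it rainbow even together with `y`. -/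
theorem IsInjectiveColoring.isRVDColoring {c : V → α} (hc : G.IsInjectiveColoring c) :
    G.IsRVDColoring c := by
  intro x y hxy
  have hS : G.neighborSet x \ {y} ⊆ G.neighborSet x := Set.sdiff_subset
  refine ⟨G.neighborSet x \ {y}, fun hx => G.irrefl hx.1, fun hy => hy.2 rfl, ?_, ?_⟩
  · intro hnadj
    refine ⟨G.not_reachable_delVerts_of_neighborSet_subset hxy ?_,
      (hc.injOn_neighborSet x).mono hS⟩
    exact fun w hw => ⟨hw, by rintro rfl; exact hnadj hw⟩
  · intro hadj
    refine ⟨not_reachable_delVerts_of_neighborSet_subset _ hxy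
      (G.neighborSet_deleteEdges_subset x y), Or.inr ((hc.injOn_neighborSet x).mono ?_)⟩
    exact Set.union_subset hS (Set.singleton_subset_iff.mpr hadj)

variable (G)

theorem isInjectiveColoring_of_injective {c : V → α} (hc : Function.Injective c) :
    G.IsInjectiveColoring c :=
  fun _ _ huv _ h => huv (hc h)

theorem rvd_le_injChromNum [Finite V] : G.rvd ≤ G.injChromNum := by
  obtain ⟨n, ⟨e⟩⟩ := Finite.exists_equiv_fin V
  obtain ⟨c, hc⟩ := Nat.sInf_mem (s := {k | ∃ c : V → Fin k, G.IsInjectiveColoring c})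
    ⟨n, e, G.isInjectiveColoring_of_injective e.injective⟩
  exact Nat.sInf_le ⟨c, hc.isRVDColoring⟩

end SimpleGraph

theorem injectiveColoring_isRVDColoring_general {V α : Type*} [Fintype V]
    (G : SimpleGraph V) :
    (∀ c : V → α, G.IsInjectiveColoring c → G.IsRVDColoring c) ∧
      G.rvd ≤ G.injChromNum :=
  ⟨fun _ hc => hc.isRVDColoring, G.rvd_le_injChromNum⟩

/-- Every injective coloring of a nontrivial connected graph `G` is a rainbow
vertex-disconnection coloring of `G`; in particular `rvd(G) ≤ χ_i(G)`. -/
theorem injectiveColoring_isRVDColoring {V α : Type*} [Fintype V] [Nontrivial V]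
    (G : SimpleGraph V) (hG : G.Connected) :
    (∀ c : V → α, G.IsInjectiveColoring c → G.IsRVDColoring c) ∧
      G.rvd ≤ G.injChromNum :=
  injectiveColoring_isRVDColoring_general G
end
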